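/- There exists a constant C(n) > 0, depending only on the dimension n ≥ 2, such that for all x ∈ ℝ^n, all unit vectors ν, all ε > 0, and all β ∈ (0,1]: ((1-β)/2)(|x + εν| + |x - εν|) + β·(average of |y| over y ∈ B(x,ε)) ≥ |x| + C(n)·β·ε²/(2(|x| + ε)). -/

import Mathlib

/-!
Midpoint convexity of the norm bounds the first term below by `(1 - β) ‖x‖`, so everything
comes from the ball average. Write `x = ‖x‖ e` with `e` a unit vector and pick a unit `f ⊥ e`.
On `B(x, ε)` we have `‖y‖ ≤ R := ‖x‖ + ε`, and then
`‖y‖ ≥ ⟪e, y⟫ + ⟪f, y⟫² / (2R)`, because `‖y‖² - ⟪e, y⟫² ≥ ⟪f, y⟫²`. Averaged over the ball,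
the linear term gives exactly `⟪e, x⟫ = ‖x‖` by the point symmetry of the ball about `x`,
while `⟪f, y⟫ = ⟪f, y - x⟫ ≥ ε/4` on the ball of radius `ε/4` around `x + (ε/2) f`, which
fills the fraction `4⁻ⁿ` of `B(x, ε)`.
-/

open MeasureTheory Metric Module
open scoped RealInnerProductSpace

theorem two_mul_norm_le_norm_add_add_norm_sub {F : Type*} [SeminormedAddCommGroup F]
    [NormedSpace ℝ F] (x v : F) : 2 * ‖x‖ ≤ ‖x + v‖ + ‖x - v‖ :=
  calc 2 * ‖x‖ = ‖(x + v) + (x - v)‖ := by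
        rw [add_add_sub_cancel, ← two_smul ℝ x, norm_smul, Real.norm_two]
    _ ≤ ‖x + v‖ + ‖x - v‖ := norm_add_le _ _

theorem Continuous.integrableOn_ball {X F : Type*} [MetricSpace X] [ProperSpace X]
    [MeasurableSpace X] [OpensMeasurableSpace X] {μ : Measure X} [IsFiniteMeasureOnCompacts μ]
    [NormedAddCommGroup F] {g : X → F} (hg : Continuous g) (x : X) (r : ℝ) :
    IntegrableOn g (ball x r) μ :=
  (hg.continuousOn.integrableOn_compact (isCompact_closedBall x r)).mono_set
    ball_subset_closedBall

section InnerProductSpace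

variable {E : Type*} [NormedAddCommGroup E] [InnerProductSpace ℝ E]

theorem exists_norm_eq_one_smul_eq [Nontrivial E] (x : E) : ∃ e : E, ‖e‖ = 1 ∧ ‖x‖ • e = x := by
  rcases eq_or_ne x 0 with rfl | hx
  · obtain ⟨e, he⟩ := exists_norm_eq E zero_le_one
    exact ⟨e, he, by simp⟩
  · exact ⟨‖x‖⁻¹ • x, by simp [norm_smul, hx], by simp [smul_smul, hx]⟩

theorem exists_norm_eq_one_inner_eq_zero [FiniteDimensional ℝ E] (hE : 2 ≤ finrank ℝ E)
    (e : E) : ∃ f : E, ‖f‖ = 1 ∧ ⟪e, f⟫ = 0 := by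
  have hspan : finrank ℝ (ℝ ∙ e) ≤ 1 := by
    simpa using finrank_span_le_card (R := ℝ) ({e} : Set E)
  have : Nontrivial (ℝ ∙ e)ᗮ := by
    rw [← finrank_pos_iff (R := ℝ)]
    have := (ℝ ∙ e).finrank_add_finrank_orthogonal
    omega
  obtain ⟨f, hf⟩ := exists_norm_eq (ℝ ∙ e)ᗮ zero_le_one
  exact ⟨f, hf, Submodule.mem_orthogonal_singleton_iff_inner_right.mp f.2⟩

theorem inner_sq_add_inner_sq_le_norm_sq {e f : E} (he : ‖e‖ = 1) (hf : ‖f‖ = 1)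
    (hef : ⟪e, f⟫ = 0) (z : E) : ⟪e, z⟫ ^ 2 + ⟪f, z⟫ ^ 2 ≤ ‖z‖ ^ 2 := by
  have hon : Orthonormal ℝ ![e, f] := by
    rw [orthonormal_iff_ite]
    intro i j
    fin_cases i <;> fin_cases j <;> simp [he, hf, hef, real_inner_comm e f ▸ hef]
  simpa [Fin.sum_univ_two] using hon.sum_inner_products_le z (s := Finset.univ)

theorem inner_add_inner_sq_div_le_norm {e f y : E} (he : ‖e‖ = 1) (hf : ‖f‖ = 1)
    (hef : ⟪e, f⟫ = 0) {R : ℝ} (hR : 0 < R) (hy : ‖y‖ ≤ R) :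
    ⟪e, y⟫ + ⟪f, y⟫ ^ 2 / (2 * R) ≤ ‖y‖ := by
  have hbessel := inner_sq_add_inner_sq_le_norm_sq he hf hef y
  have hey : ⟪e, y⟫ ≤ ‖y‖ := by simpa [he] using real_inner_le_norm e y
  -- `‖y‖² - ⟪e, y⟫² = (‖y‖ - ⟪e, y⟫) (‖y‖ + ⟪e, y⟫)` and the second factor is at most `2 R`
  have : ⟪f, y⟫ ^ 2 / (2 * R) ≤ ‖y‖ - ⟪e, y⟫ := by
    rw [div_le_iff₀ (by positivity)]
    nlinarith [mul_nonneg (sub_nonneg.mpr hey) (by linarith : 0 ≤ 2 * R - ‖y‖ - ⟪e, y⟫)]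
  linarith

variable [FiniteDimensional ℝ E] [MeasurableSpace E] [BorelSpace E]
  (μ : Measure E) [μ.IsAddHaarMeasure]

theorem setIntegral_inner_sub_center_ball (e x : E) (r : ℝ) :
    ∫ y in ball x r, ⟪e, y - x⟫ ∂μ = 0 := by
  have hrefl := (Measure.measurePreserving_sub_left μ (x + x)).setIntegral_preimage_emb
    (Homeomorph.subLeft (x + x)).measurableEmbedding (fun y => ⟪e, y - x⟫) (ball x r)
  have hball : (fun y => x + x - y) ⁻¹' ball x r = ball x r := by
    ext y; simp [dist_eq_norm, ← norm_neg (y - x), add_sub_assoc]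
  have hodd : ∀ y, ⟪e, x + x - y - x⟫ = -⟪e, y - x⟫ := fun y => by
    rw [← inner_neg_right]; congr 1; abel
  simp only [hball, hodd, integral_neg] at hrefl
  linarith

theorem setIntegral_inner_ball (e x : E) (r : ℝ) :
    ∫ y in ball x r, ⟪e, y⟫ ∂μ = μ.real (ball x r) * ⟪e, x⟫ := by
  have hsplit : (fun y => ⟪e, y⟫) = fun y => ⟪e, y - x⟫ + ⟪e, x⟫ := by
    simp only [← inner_add_right, sub_add_cancel]
  have hint : IntegrableOn (fun y => ⟪e, y - x⟫) (ball x r) μ :=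
    (continuous_const.inner (continuous_id.sub continuous_const)).integrableOn_ball x r
  rw [hsplit, integral_add hint (continuous_const.integrableOn_ball x r),
    setIntegral_inner_sub_center_ball, setIntegral_const, smul_eq_mul, zero_add]

theorem mul_measureReal_ball_le_setIntegral_inner_sub_sq {f : E} (hf : ‖f‖ = 1) (x : E) {ε : ℝ}
    (hε : 0 < ε) :
    4⁻¹ ^ finrank ℝ E * (ε / 4) ^ 2 * μ.real (ball x ε) ≤
      ∫ y in ball x ε, ⟪f, y - x⟫ ^ 2 ∂μ := by
  set p := x + (ε / 2) • f
  have hpx : ‖p - x‖ = ε / 2 := by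
    rw [add_sub_cancel_left, norm_smul, hf, mul_one, Real.norm_of_nonneg (by positivity)]
  have hsub : ball p (ε / 4) ⊆ ball x ε :=
    ball_subset_ball' (by rw [dist_eq_norm, hpx]; linarith)
  have hlow : ∀ y ∈ ball p (ε / 4), (ε / 4) ^ 2 ≤ ⟪f, y - x⟫ ^ 2 := by
    intro y hy
    have hyp : |⟪f, y - p⟫| < ε / 4 := by
      rw [mem_ball, dist_eq_norm] at hy
      exact (abs_real_inner_le_norm f _).trans_lt (by rwa [hf, one_mul])
    have hfyx : ⟪f, y - x⟫ = ⟪f, y - p⟫ + ε / 2 := by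
      rw [show y - x = (y - p) + (ε / 2) • f by simp [p]; abel, inner_add_right,
        real_inner_smul_right, real_inner_self_eq_norm_sq, hf]
      ring
    have := (abs_lt.mp hyp).1
    nlinarith
  have hvol : μ.real (ball p (ε / 4)) = 4⁻¹ ^ finrank ℝ E * μ.real (ball x ε) := by
    rw [measureReal_def, measureReal_def, show ε / 4 = 4⁻¹ * ε by ring,
      Measure.addHaar_ball_mul_of_pos μ p (by norm_num : (0 : ℝ) < 4⁻¹),
      Measure.addHaar_ball_center μ x, ENNReal.toReal_mul, ENNReal.toReal_ofReal (by positivity)]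
  have hcont : Continuous fun y => ⟪f, y - x⟫ ^ 2 :=
    (continuous_const.inner (continuous_id.sub continuous_const)).pow 2
  calc 4⁻¹ ^ finrank ℝ E * (ε / 4) ^ 2 * μ.real (ball x ε)
      = ∫ _ in ball p (ε / 4), (ε / 4) ^ 2 ∂μ := by
        rw [setIntegral_const, hvol, smul_eq_mul]; ring
    _ ≤ ∫ y in ball p (ε / 4), ⟪f, y - x⟫ ^ 2 ∂μ :=
        setIntegral_mono_on (continuous_const.integrableOn_ball p _) (hcont.integrableOn_ball p _)
          measurableSet_ball hlow
    _ ≤ ∫ y in ball x ε, ⟪f, y - x⟫ ^ 2 ∂μ :=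
        setIntegral_mono_set (hcont.integrableOn_ball x ε)
          (Filter.Eventually.of_forall fun y => sq_nonneg _) hsub.eventuallyLE

theorem norm_add_le_setAverage_norm (hE : 2 ≤ finrank ℝ E) (x : E) {ε : ℝ} (hε : 0 < ε) :
    ‖x‖ + 4⁻¹ ^ finrank ℝ E / 16 * ε ^ 2 / (2 * (‖x‖ + ε)) ≤ ⨍ y in ball x ε, ‖y‖ ∂μ := by
  have : Nontrivial E := Module.nontrivial_of_finrank_pos (R := ℝ) (by omega)
  obtain ⟨e, he, hxe⟩ := exists_norm_eq_one_smul_eq x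
  obtain ⟨f, hf, hef⟩ := exists_norm_eq_one_inner_eq_zero hE e
  set R := ‖x‖ + ε
  have hR : 0 < R := by positivity
  have hex : ⟪e, x⟫ = ‖x‖ := by
    conv_lhs => rw [← hxe]
    rw [real_inner_smul_right, real_inner_self_eq_norm_sq, he]; ring
  have hfx : ⟪f, x⟫ = 0 := by rw [← hxe, real_inner_smul_right, real_inner_comm, hef, mul_zero]
  have hpt : ∀ y ∈ ball x ε, ⟪e, y⟫ + (2 * R)⁻¹ * ⟪f, y - x⟫ ^ 2 ≤ ‖y‖ := by
    intro y hy
    have hyR : ‖y‖ ≤ R := by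
      have := norm_le_norm_add_norm_sub' y x
      rw [mem_ball, dist_eq_norm] at hy
      linarith
    rw [inner_sub_right, hfx, sub_zero, inv_mul_eq_div]
    exact inner_add_inner_sq_div_le_norm he hf hef hR hyR
  have hinner : IntegrableOn (fun y => ⟪e, y⟫) (ball x ε) μ :=
    (continuous_const.inner continuous_id).integrableOn_ball x ε
  have hsq : IntegrableOn (fun y => (2 * R)⁻¹ * ⟪f, y - x⟫ ^ 2) (ball x ε) μ :=
    Continuous.integrableOn_ball
      (continuous_const.mul ((continuous_const.inner (continuous_id.sub continuous_const)).pow 2))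
      x ε
  have hint : μ.real (ball x ε) * (‖x‖ + 4⁻¹ ^ finrank ℝ E / 16 * ε ^ 2 / (2 * R)) ≤
      ∫ y in ball x ε, ‖y‖ ∂μ := calc
    _ = ∫ y in ball x ε, ⟪e, y⟫ ∂μ +
        (2 * R)⁻¹ * (4⁻¹ ^ finrank ℝ E * (ε / 4) ^ 2 * μ.real (ball x ε)) := by
      rw [setIntegral_inner_ball, hex]; ring
    _ ≤ ∫ y in ball x ε, ⟪e, y⟫ ∂μ + (2 * R)⁻¹ * ∫ y in ball x ε, ⟪f, y - x⟫ ^ 2 ∂μ := by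
      gcongr
      exact mul_measureReal_ball_le_setIntegral_inner_sub_sq μ hf x hε
    _ = ∫ y in ball x ε, (⟪e, y⟫ + (2 * R)⁻¹ * ⟪f, y - x⟫ ^ 2) ∂μ := by
      rw [integral_add hinner hsq, integral_const_mul]
    _ ≤ ∫ y in ball x ε, ‖y‖ ∂μ :=
      setIntegral_mono_on (hinner.add hsq) (continuous_norm.integrableOn_ball x ε)
        measurableSet_ball hpt
  have hV : 0 < μ.real (ball x ε) :=
    ENNReal.toReal_pos (measure_ball_pos μ x hε).ne' measure_ball_lt_top.ne
  rw [setAverage_eq, smul_eq_mul, le_inv_mul_iff₀ hV]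
  exact hint

end InnerProductSpace

theorem drift_estimate (n : ℕ) (hn : 2 ≤ n) :
    ∃ C : ℝ, 0 < C ∧
      ∀ (x ν : EuclideanSpace ℝ (Fin n)) (ε β : ℝ), ‖ν‖ = 1 → 0 < ε →
        β ∈ Set.Ioc (0 : ℝ) 1 →
        ((1 - β) / 2) * (‖x + ε • ν‖ + ‖x - ε • ν‖) +
            β * ⨍ y in ball x ε, ‖y‖ ≥
          ‖x‖ + C * β * ε ^ 2 / (2 * (‖x‖ + ε)) := by
  refine ⟨4⁻¹ ^ n / 16, by positivity, fun x ν ε β _ hε ⟨hβ₀, hβ₁⟩ => ?_⟩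
  have hmid := two_mul_norm_le_norm_add_add_norm_sub x (ε • ν)
  have havg := norm_add_le_setAverage_norm volume (by rwa [finrank_euclideanSpace_fin]) x hε
  rw [finrank_euclideanSpace_fin] at havg
  calc ‖x‖ + 4⁻¹ ^ n / 16 * β * ε ^ 2 / (2 * (‖x‖ + ε))
      = (1 - β) / 2 * (2 * ‖x‖) + β * (‖x‖ + 4⁻¹ ^ n / 16 * ε ^ 2 / (2 * (‖x‖ + ε))) := by ring
    _ ≤ (1 - β) / 2 * (‖x + ε • ν‖ + ‖x - ε • ν‖) + β * ⨍ y in ball x ε, ‖y‖ := by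
      gcongr
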